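/- arXiv:1707.03220 — 4 statements merged into one kernel-verified Lean document; each statement's English description precedes it below -/
import Mathlib

section
/- In the partitioning setup, let K_x ∈ H denote the representer of evaluation at x for the global RKHS H (i.e., ⟨f, K_x⟩_H = f(x) for all f ∈ H; explicitly, for x ∈ X_j, K_x has j-th component p_j⁻¹Φ_j(x) and zero other components). Then the global covariance operator T := ∫_X K_x ⊗_H K_x dν(x) (with (u⊗_H u)h = ⟨h,u⟩_H u, the outer product taken with respect to the weighted inner product of H) is block diagonal with respect to the decomposition H = ⊕_j H_j, and acts on the j-th component as the local covariance operator: (Th)_j = T_j h_j for all h = h₁+…+h_m ∈ H, where T_j = ∫_{X_j} Φ_j(x)⊗Φ_j(x) dν_j(x); equivalently T = Σ_j p_j⁻¹ T̃_j, where T̃_j := ∫_{X_j} Φ_j(x)⊗Φ_j(x) dν(x) = p_j T_j. -/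
open MeasureTheory ProbabilityTheory Real Filter
open scoped ENNReal NNReal BigOperators InnerProductSpace

noncomputable section

/-- The rank-one operator `(u ⊗ u) h = ⟪h, u⟫ u`. -/
def rankOne {H : Type*} [NormedAddCommGroup H] [InnerProductSpace ℝ H] (u : H) : H →L[ℝ] H :=
  (innerSL ℝ u).smulRight u

/-- The empirical covariance operator `T_x = n⁻¹ ∑ᵢ Φ(xᵢ) ⊗ Φ(xᵢ)`. -/
def empCov {X H : Type*} [NormedAddCommGroup H] [InnerProductSpace ℝ H] {n : ℕ}
    (Φ : X → H) (x : Fin n → X) : H →L[ℝ] H :=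
  (n : ℝ)⁻¹ • ∑ i, rankOne (Φ (x i))

/-- `S*_x y = n⁻¹ ∑ᵢ yᵢ Φ(xᵢ)`. -/
def empMean {X H : Type*} [NormedAddCommGroup H] [InnerProductSpace ℝ H] {n : ℕ}
    (Φ : X → H) (x : Fin n → X) (y : Fin n → ℝ) : H :=
  (n : ℝ)⁻¹ • ∑ i, y i • Φ (x i)

/-- Effective dimension `N(T, λ) = Tr[(T+λ)⁻¹T] = ∑ᵢ μᵢ/(μᵢ+λ)` of a positive self-adjoint
trace-class operator with eigenvalues `μ` (counted with multiplicity). -/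
def effDim {ι : Type*} (μ : ι → ℝ) (lam : ℝ) : ℝ := ∑' i, μ i / (μ i + lam)

/-- `B_k(T,λ) = 1 + (2/(kλ) + √(N(T,λ)/(kλ)))²`. -/
def Bconst {ι : Type*} (μ : ι → ℝ) (k lam : ℝ) : ℝ :=
  1 + (2 / (k * lam) + Real.sqrt (effDim μ lam / (k * lam))) ^ 2

/-- The conditional probability measure `ν(· | A) = ν(A)⁻¹ ν(· ∩ A)`. -/
def condMeasure {X : Type*} [MeasurableSpace X] (ν : Measure X) (A : Set X) : Measure X :=
  (ν A)⁻¹ • ν.restrict A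

/-- `P` is the orthogonal projection onto the subspace `S`. -/
def IsOrthoProjOnto {H : Type*} [NormedAddCommGroup H] [InnerProductSpace ℝ H]
    (P : H →L[ℝ] H) (S : Submodule ℝ H) : Prop :=
  P ∘L P = P ∧ (∀ u v : H, ⟪P u, v⟫_ℝ = ⟪u, P v⟫_ℝ) ∧ LinearMap.range (P : H →ₗ[ℝ] H) = S

/-- The Nyström operator `g_{λ,l}(T_x) = (P T_x P + λ)⁻¹ P`, which coincides with
`A⁻¹ P` for `A = (P T_x P + λ)|_{ran P} : ran P → ran P`. -/
def nysOp {H : Type*} [NormedAddCommGroup H] [InnerProductSpace ℝ H]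
    (lam : ℝ) (T P : H →L[ℝ] H) : H →L[ℝ] H :=
  (Ring.inverse (P ∘L T ∘L P + lam • (1 : H →L[ℝ] H))) ∘L P

/-!
Testing the weak characterisation of `T` against `h' = single k v` kills every block but the
`k`-th, and disjointness of the cells turns the integrand into `⟪h_k, Φ_k⟫⟪v, Φ_k⟫` on `X_k`.
So `p_k ⟪(T h)_k, v⟫ = ∫_{X_k} ⟪h_k, Φ_k⟫⟪v, Φ_k⟫ dν = p_k ⟪T_k h_k, v⟫`, using
`ν|_{X_k} = p_k • ν_k`; dividing by `p_k > 0` gives the block structure.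
-/

open Function

theorem restrict_eq_smul_condMeasure {X : Type*} [MeasurableSpace X] {ν : Measure X}
    {A : Set X} (hA : ν A ≠ ∞) : ν.restrict A = ν A • condMeasure ν A := by
  rcases eq_or_ne (ν A) 0 with h0 | h0
  · simp [Measure.restrict_eq_zero.mpr h0, h0]
  · rw [condMeasure, smul_smul, ENNReal.mul_inv_cancel h0 hA, one_smul]

/-- `T` is the covariance operator `∫ Φ ⊗ Φ dμ`, characterised weakly. -/
def IsCovOp {X H : Type*} [MeasurableSpace X] [NormedAddCommGroup H] [InnerProductSpace ℝ H]
    (μ : Measure X) (Φ : X → H) (T : H →L[ℝ] H) : Prop :=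
  ∀ u v : H, ⟪T u, v⟫_ℝ = ∫ x, ⟪u, Φ x⟫_ℝ * ⟪v, Φ x⟫_ℝ ∂μ

namespace IsCovOp

variable {X H : Type*} [MeasurableSpace X] [NormedAddCommGroup H] [InnerProductSpace ℝ H]
  {μ : Measure X} {Φ : X → H} {T T' : H →L[ℝ] H}

theorem unique (hT : IsCovOp μ Φ T) (hT' : IsCovOp μ Φ T') : T = T' :=
  ContinuousLinearMap.ext fun u => ext_inner_right ℝ fun v => (hT u v).trans (hT' u v).symm

theorem smul_measure (hT : IsCovOp μ Φ T) (c : ℝ≥0∞) : IsCovOp (c • μ) Φ (c.toReal • T) := by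
  intro u v
  rw [integral_smul_measure, ← hT, smul_apply, real_inner_smul_left, smul_eq_mul]

theorem restrict_of_condMeasure {ν : Measure X} {A : Set X} (hA : ν A ≠ ∞)
    (hT : IsCovOp (condMeasure ν A) Φ T) : IsCovOp (ν.restrict A) Φ ((ν A).toReal • T) :=
  restrict_eq_smul_condMeasure hA ▸ hT.smul_measure (ν A)

end IsCovOp

theorem sum_indicator_mul_indicator_of_pairwise_disjoint {ι X R : Type*} [Fintype ι]
    [NonUnitalNonAssocSemiring R] {s : ι → Set X} (hs : Pairwise (Disjoint on s))
    (f : ι → X → R) (k : ι) (g : X → R) (x : X) :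
    (∑ j, (s j).indicator (f j) x) * (s k).indicator g x
      = (s k).indicator (fun y => f k y * g y) x := by
  by_cases hx : x ∈ s k
  · have hsum : ∑ j, (s j).indicator (f j) x = f k x :=
      (Fintype.sum_eq_single k fun j hj =>
        Set.indicator_of_notMem (fun hxj => (hs hj).le_bot ⟨hxj, hx⟩) _).trans
        (Set.indicator_of_mem hx _)
    simp only [hsum, Set.indicator_of_mem hx]
  · simp only [Set.indicator_of_notMem hx, mul_zero]

section PiLpSingle

variable {ι : Type*} [Fintype ι] [DecidableEq ι] {H : ι → Type*}
  [∀ j, NormedAddCommGroup (H j)] [∀ j, InnerProductSpace ℝ (H j)]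

theorem sum_indicator_inner_single {X : Type*} (s : ι → Set X) (Φ : ∀ j, X → H j) (k : ι)
    (v : H k) (x : X) :
    ∑ j, (s j).indicator (fun y => ⟪PiLp.single 2 k v j, Φ j y⟫_ℝ) x
      = (s k).indicator (fun y => ⟪v, Φ k y⟫_ℝ) x := by
  rw [Fintype.sum_eq_single k fun j hj => by simp [PiLp.single_eq_of_ne 2 hj],
    PiLp.single_eq_same]

theorem sum_mul_inner_single (p : ι → ℝ) (g : PiLp 2 H) (k : ι) (v : H k) :
    ∑ j, p j * ⟪g j, PiLp.single 2 k v j⟫_ℝ = p k * ⟪g k, v⟫_ℝ := by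
  rw [Fintype.sum_eq_single k fun j hj => by simp [PiLp.single_eq_of_ne 2 hj],
    PiLp.single_eq_same]

end PiLpSingle

theorem stmt6_general {X : Type} [MeasurableSpace X] (ν : Measure X) [IsProbabilityMeasure ν]
    (m : ℕ) (Xs : Fin m → Set X)
    (hXmeas : ∀ j, MeasurableSet (Xs j))
    (hXdisj : ∀ j k, j ≠ k → Disjoint (Xs j) (Xs k))
    (hppos : ∀ j, 0 < ν (Xs j))
    (H : Fin m → Type) [∀ j, NormedAddCommGroup (H j)] [∀ j, InnerProductSpace ℝ (H j)]
    (Φ : ∀ j, X → H j)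
    -- the local covariance operators T_j = ∫ Φ_j ⊗ Φ_j dν_j
    (Tloc : ∀ j, H j →L[ℝ] H j)
    (hTloc : ∀ j (u v : H j), ⟪Tloc j u, v⟫_ℝ
      = ∫ x, ⟪u, Φ j x⟫_ℝ * ⟪v, Φ j x⟫_ℝ ∂(condMeasure ν (Xs j)))
    -- the operators T̃_j = ∫_{X_j} Φ_j ⊗ Φ_j dν
    (Ttil : ∀ j, H j →L[ℝ] H j)
    (hTtil : ∀ j (u v : H j), ⟪Ttil j u, v⟫_ℝ
      = ∫ x in Xs j, ⟪u, Φ j x⟫_ℝ * ⟪v, Φ j x⟫_ℝ ∂ν)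
    -- the global covariance operator, characterized weakly w.r.t. the weighted inner product
    (Tglob : PiLp 2 H →L[ℝ] PiLp 2 H)
    (hTglob : ∀ h h' : PiLp 2 H,
      ∑ j, (ν (Xs j)).toReal * ⟪Tglob h j, h' j⟫_ℝ
        = ∫ x, (∑ j, (Xs j).indicator (fun x' => ⟪h j, Φ j x'⟫_ℝ) x)
            * (∑ j, (Xs j).indicator (fun x' => ⟪h' j, Φ j x'⟫_ℝ) x) ∂ν) :
    (∀ (h : PiLp 2 H) (j : Fin m), Tglob h j = Tloc j (h j)) ∧
    (∀ j, Ttil j = (ν (Xs j)).toReal • Tloc j) := by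
  have hres : ∀ j, IsCovOp (ν.restrict (Xs j)) (Φ j) ((ν (Xs j)).toReal • Tloc j) :=
    fun j => IsCovOp.restrict_of_condMeasure (measure_ne_top ν _) (hTloc j)
  refine ⟨fun h k => ext_inner_right ℝ fun v => ?_,
    fun j => IsCovOp.unique (hTtil j) (hres j)⟩
  have hp : (ν (Xs k)).toReal ≠ 0 :=
    ENNReal.toReal_ne_zero.mpr ⟨(hppos k).ne', measure_ne_top ν _⟩
  have hweak := hTglob h (PiLp.single 2 k v)
  simp only [sum_mul_inner_single, sum_indicator_inner_single,
    sum_indicator_mul_indicator_of_pairwise_disjoint (fun i j => hXdisj i j),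
    integral_indicator (hXmeas k), ← hres k (h k) v, smul_apply, real_inner_smul_left] at hweak
  exact mul_left_cancel₀ hp hweak

/-- the global covariance operator `T = ∫ K_x ⊗_H K_x dν` of the weighted
direct-sum RKHS `H = ⊕_j H_j` is block diagonal and acts as `T_j` on the `j`-th component;
equivalently `T_j = p_j⁻¹ T̃_j` where `T̃_j = ∫_{X_j} Φ_j(x) ⊗ Φ_j(x) dν(x)`.
The operators are characterized weakly: `⟪T h, h'⟫_H = ∫ h(x) h'(x) dν(x)` where
`h(x) = ⟪h_j, Φ_j(x)⟫` for `x ∈ X_j` (zero-extension), and the weighted inner product is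
`⟪h, h'⟫_H = ∑_j p_j ⟪h_j, h'_j⟫`. -/
theorem stmt6 {X : Type} [MeasurableSpace X] (ν : Measure X) [IsProbabilityMeasure ν]
    (m : ℕ) (Xs : Fin m → Set X)
    (hXmeas : ∀ j, MeasurableSet (Xs j))
    (hXdisj : ∀ j k, j ≠ k → Disjoint (Xs j) (Xs k))
    (hXcover : (⋃ j, Xs j) = Set.univ)
    (hppos : ∀ j, 0 < ν (Xs j))
    (H : Fin m → Type) [∀ j, NormedAddCommGroup (H j)] [∀ j, InnerProductSpace ℝ (H j)]
    [∀ j, CompleteSpace (H j)]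
    (Φ : ∀ j, X → H j) (hΦmeas : ∀ j, StronglyMeasurable (Φ j))
    (κ : Fin m → ℝ) (hκ : ∀ j, ∀ x ∈ Xs j, ‖Φ j x‖ ^ 2 ≤ κ j ^ 2)
    -- the local covariance operators T_j = ∫ Φ_j ⊗ Φ_j dν_j
    (Tloc : ∀ j, H j →L[ℝ] H j)
    (hTloc : ∀ j (u v : H j), ⟪Tloc j u, v⟫_ℝ
      = ∫ x, ⟪u, Φ j x⟫_ℝ * ⟪v, Φ j x⟫_ℝ ∂(condMeasure ν (Xs j)))
    -- the operators T̃_j = ∫_{X_j} Φ_j ⊗ Φ_j dν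
    (Ttil : ∀ j, H j →L[ℝ] H j)
    (hTtil : ∀ j (u v : H j), ⟪Ttil j u, v⟫_ℝ
      = ∫ x in Xs j, ⟪u, Φ j x⟫_ℝ * ⟪v, Φ j x⟫_ℝ ∂ν)
    -- the global covariance operator, characterized weakly w.r.t. the weighted inner product
    (Tglob : PiLp 2 H →L[ℝ] PiLp 2 H)
    (hTglob : ∀ h h' : PiLp 2 H,
      ∑ j, (ν (Xs j)).toReal * ⟪Tglob h j, h' j⟫_ℝ
        = ∫ x, (∑ j, (Xs j).indicator (fun x' => ⟪h j, Φ j x'⟫_ℝ) x)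
            * (∑ j, (Xs j).indicator (fun x' => ⟪h' j, Φ j x'⟫_ℝ) x) ∂ν) :
    (∀ (h : PiLp 2 H) (j : Fin m), Tglob h j = Tloc j (h j)) ∧
    (∀ j, Ttil j = (ν (Xs j)).toReal • Tloc j) :=
  stmt6_general ν m Xs hXmeas hXdisj hppos H Φ Tloc hTloc Ttil hTtil Tglob hTglob
end
end

section
/- In the partitioning setup, suppose that for each j ∈ {1,…,m} there are r_j ∈ (0,1/2] and R < ∞ with f_j = T_j^{r_j} g_j for some g_j ∈ H_j with ‖g_j‖_{H_j} ≤ R. Set r := min_j r_j. Then f_ρ = f₁+…+f_m satisfies the global source condition: there exists g ∈ H with f_ρ = T^r g and ‖g‖_H ≤ R·max_j max(1, κ_j²)^{r_j − r}, where T is the global covariance operator (block diagonal, acting as T_j on the j-th summand) and T^r is defined by the functional calculus blockwise. -/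
open MeasureTheory ProbabilityTheory Real Filter
open scoped ENNReal NNReal BigOperators InnerProductSpace

noncomputable section

/-! Testing the covariance identity against a normalized eigenvector shows that every
eigenvalue of `T_j` is at most `κ_j²`. Since `T_j^{r_j} = T_j^r T_j^{r_j - r}` and `t ↦ t^{r_j - r}`
is bounded by `max(1, κ_j²)^{r_j - r}` on the spectrum, `g_j := T_j^{r_j - r} g_j⁰` is a source
element for the exponent `r`; the weights `p_j` sum to at most `1`. -/

theorem le_of_covariance_eigenvector {X H : Type*} [MeasurableSpace X] [NormedAddCommGroup H]
    [InnerProductSpace ℝ H] {ρ : Measure X} [IsProbabilityMeasure ρ] {Φ : X → H}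
    {T : H →L[ℝ] H}
    (hT : ∀ u v, ⟪T u, v⟫_ℝ = ∫ x, ⟪u, Φ x⟫_ℝ * ⟪v, Φ x⟫_ℝ ∂ρ)
    {K : ℝ} (hΦ : ∀ᵐ x ∂ρ, ‖Φ x‖ ^ 2 ≤ K) {e : H} (he : ‖e‖ = 1) {c : ℝ} (hTe : T e = c • e) :
    c ≤ K := by
  have hbound : ∀ᵐ x ∂ρ, ⟪e, Φ x⟫_ℝ * ⟪e, Φ x⟫_ℝ ≤ K := by
    filter_upwards [hΦ] with x hx
    calc ⟪e, Φ x⟫_ℝ * ⟪e, Φ x⟫_ℝ ≤ ⟪e, e⟫_ℝ * ⟪Φ x, Φ x⟫_ℝ := real_inner_mul_inner_self_le _ _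
      _ = ‖Φ x‖ ^ 2 := by simp [he]
      _ ≤ K := hx
  calc c = ⟪T e, e⟫_ℝ := by simp [hTe, real_inner_smul_left, he]
    _ = ∫ x, ⟪e, Φ x⟫_ℝ * ⟪e, Φ x⟫_ℝ ∂ρ := hT e e
    _ ≤ ∫ _, K ∂ρ :=
      integral_mono_of_nonneg (.of_forall fun _ => mul_self_nonneg _) (integrable_const K) hbound
    _ = K := by simp

theorem HilbertBasis.exists_inner_eq_mul_inner {ι H : Type*} [NormedAddCommGroup H]
    [InnerProductSpace ℝ H] (b : HilbertBasis ι ℝ H) {w : ι → ℝ} {C : ℝ} (hC : 0 ≤ C)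
    (hw : ∀ i, |w i| ≤ C) (g : H) :
    ∃ g' : H, ‖g'‖ ≤ C * ‖g‖ ∧ ∀ i, ⟪g', b i⟫_ℝ = w i * ⟪g, b i⟫_ℝ := by
  set y := C • b.repr g
  have hle : ∀ i, ‖w i * b.repr g i‖ ≤ ‖y i‖ := fun i => by
    simp only [y, lp.coeFn_smul, Pi.smul_apply, smul_eq_mul, norm_mul, Real.norm_eq_abs,
      abs_of_nonneg hC]
    exact mul_le_mul_of_nonneg_right (hw i) (abs_nonneg _)
  let a : lp (fun _ : ι => ℝ) 2 := ⟨fun i => w i * b.repr g i, (lp.memℓp y).mono' hle⟩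
  refine ⟨b.repr.symm a, ?_, fun i => ?_⟩
  · calc ‖b.repr.symm a‖ = ‖a‖ := b.repr.symm.norm_map a
      _ ≤ ‖y‖ := lp.norm_mono two_ne_zero hle
      _ = C * ‖g‖ := by
        rw [lp.norm_const_smul two_ne_zero, b.repr.norm_map, Real.norm_of_nonneg hC]
  · rw [real_inner_comm, ← b.repr_apply_apply, LinearIsometryEquiv.apply_symm_apply,
      ← real_inner_comm g, ← b.repr_apply_apply]

theorem HilbertBasis.exists_source_condition_of_le_exponent {ι H : Type*} [NormedAddCommGroup H]
    [InnerProductSpace ℝ H] (b : HilbertBasis ι ℝ H) {μ : ι → ℝ} {M r s : ℝ}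
    (hμ : ∀ i, 0 ≤ μ i) (hμM : ∀ i, μ i ≤ M) (hM : 0 ≤ M) (hs : s ≠ 0) (hrs : r ≤ s) {f g : H}
    (hf : ∀ i, ⟪f, b i⟫_ℝ = μ i ^ s * ⟪g, b i⟫_ℝ) :
    ∃ g' : H, ‖g'‖ ≤ M ^ (s - r) * ‖g‖ ∧ ∀ i, ⟪f, b i⟫_ℝ = μ i ^ r * ⟪g', b i⟫_ℝ := by
  have hw : ∀ i, |μ i ^ (s - r)| ≤ M ^ (s - r) := fun i => by
    rw [abs_of_nonneg (Real.rpow_nonneg (hμ i) _)]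
    exact Real.rpow_le_rpow (hμ i) (hμM i) (sub_nonneg.2 hrs)
  obtain ⟨g', hg', hg'g⟩ := b.exists_inner_eq_mul_inner (Real.rpow_nonneg hM _) hw g
  refine ⟨g', hg', fun i => ?_⟩
  rw [hf, hg'g, ← mul_assoc, ← Real.rpow_add' (hμ i) (by rwa [add_sub_cancel]), add_sub_cancel]

theorem Finset.sum_mul_le_of_sum_le_one {ι : Type*} (s : Finset ι) {w a : ι → ℝ} {B : ℝ}
    (hw : ∀ j ∈ s, 0 ≤ w j) (hws : ∑ j ∈ s, w j ≤ 1) (ha : ∀ j ∈ s, a j ≤ B) (hB : 0 ≤ B) :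
    ∑ j ∈ s, w j * a j ≤ B :=
  calc ∑ j ∈ s, w j * a j ≤ ∑ j ∈ s, w j * B :=
        Finset.sum_le_sum fun j hj => mul_le_mul_of_nonneg_left (ha j hj) (hw j hj)
    _ = (∑ j ∈ s, w j) * B := (Finset.sum_mul ..).symm
    _ ≤ B := mul_le_of_le_one_left hB hws

theorem stmt7_general {X : Type} [MeasurableSpace X] (ν : Measure X) [IsProbabilityMeasure ν]
    (m : ℕ) [NeZero m] (Xs : Fin m → Set X)
    (hXmeas : ∀ j, MeasurableSet (Xs j))
    (hXdisj : ∀ j k, j ≠ k → Disjoint (Xs j) (Xs k))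
    (hppos : ∀ j, 0 < ν (Xs j))
    (H : Fin m → Type) [∀ j, NormedAddCommGroup (H j)] [∀ j, InnerProductSpace ℝ (H j)]
    (Φ : ∀ j, X → H j)
    (κ : Fin m → ℝ) (hκ : ∀ j, ∀ x ∈ Xs j, ‖Φ j x‖ ^ 2 ≤ κ j ^ 2)
    (T : ∀ j, H j →L[ℝ] H j)
    (hTcov : ∀ j (u v : H j), ⟪T j u, v⟫_ℝ
      = ∫ x, ⟪u, Φ j x⟫_ℝ * ⟪v, Φ j x⟫_ℝ ∂(condMeasure ν (Xs j)))
    (b : ∀ j, HilbertBasis ℕ ℝ (H j)) (μ : Fin m → ℕ → ℝ)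
    (hμnn : ∀ j i, 0 ≤ μ j i)
    (hdiag : ∀ j i, T j (b j i) = μ j i • b j i)
    (f : ∀ j, H j)
    (rj : Fin m → ℝ) (hrj : ∀ j, rj j ∈ Set.Ioc (0:ℝ) (1/2))
    (r : ℝ) (hr : IsLeast (Set.range rj) r)
    (R : ℝ)
    -- local source conditions: f_j = T_j^{r_j} g_j with ‖g_j‖ ≤ R
    (hsource : ∀ j, ∃ g : H j, ‖g‖ ≤ R ∧
      ∀ i, ⟪f j, b j i⟫_ℝ = μ j i ^ rj j * ⟪g, b j i⟫_ℝ) :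
    -- global source condition: f_ρ = T^r g with the stated bound on the weighted norm of g
    ∃ g : ∀ j, H j,
      ∑ j, (ν (Xs j)).toReal * ‖g j‖ ^ 2
        ≤ (R * Finset.univ.sup' Finset.univ_nonempty
            (fun j => max 1 (κ j ^ 2) ^ (rj j - r))) ^ 2 ∧
      ∀ j i, ⟪f j, b j i⟫_ℝ = μ j i ^ r * ⟪g j, b j i⟫_ℝ := by
  set S := Finset.univ.sup' Finset.univ_nonempty (fun j => max 1 (κ j ^ 2) ^ (rj j - r))
  have hμle : ∀ j i, μ j i ≤ max 1 (κ j ^ 2) := fun j i =>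
    haveI : IsProbabilityMeasure (condMeasure ν (Xs j)) := cond_isProbabilityMeasure (hppos j).ne'
    (le_of_covariance_eigenvector (hTcov j) ((ae_cond_mem (hXmeas j)).mono (hκ j))
      ((b j).orthonormal.1 i) (hdiag j i)).trans (le_max_right _ _)
  have hblock : ∀ j, ∃ g : H j, ‖g‖ ≤ R * S ∧ ∀ i, ⟪f j, b j i⟫_ℝ = μ j i ^ r * ⟪g, b j i⟫_ℝ := by
    intro j
    obtain ⟨g₀, hg₀R, hg₀⟩ := hsource j
    have hM : (0 : ℝ) ≤ max 1 (κ j ^ 2) := zero_le_one.trans (le_max_left _ _)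
    obtain ⟨g, hg, hgf⟩ := (b j).exists_source_condition_of_le_exponent (hμnn j) (hμle j) hM
      (hrj j).1.ne' (hr.2 ⟨j, rfl⟩) hg₀
    have hCS : max 1 (κ j ^ 2) ^ (rj j - r) ≤ S :=
      Finset.le_sup' (fun j => max 1 (κ j ^ 2) ^ (rj j - r)) (Finset.mem_univ j)
    refine ⟨g, hg.trans ?_, hgf⟩
    rw [mul_comm R]
    exact mul_le_mul hCS hg₀R (norm_nonneg _) ((Real.rpow_nonneg hM _).trans hCS)
  choose g hg hgf using hblock
  have hweights : ∑ j, (ν (Xs j)).toReal ≤ 1 :=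
    calc ∑ j, (ν (Xs j)).toReal = ν.real (⋃ j, Xs j) :=
          (measureReal_iUnion_fintype (fun j k hjk => hXdisj j k hjk) hXmeas).symm
      _ ≤ 1 := measureReal_le_one
  exact ⟨g, Finset.univ.sum_mul_le_of_sum_le_one (fun _ _ => ENNReal.toReal_nonneg) hweights
    (fun j _ => pow_le_pow_left₀ (norm_nonneg _) (hg j) 2) (sq_nonneg _), hgf⟩

/-- local source conditions `f_j = T_j^{r_j} g_j`, `‖g_j‖ ≤ R`, imply the global
source condition `f_ρ = T^r g` with `r = min_j r_j` and
`‖g‖_H ≤ R · max_j max(1,κ_j²)^{r_j−r}`, where `T` is the block-diagonal global covariance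
operator and fractional powers are taken blockwise via the functional calculus (expressed
through the diagonalizing bases `b_j` of the `T_j`). -/
theorem stmt7 {X : Type} [MeasurableSpace X] (ν : Measure X) [IsProbabilityMeasure ν]
    (m : ℕ) [NeZero m] (Xs : Fin m → Set X)
    (hXmeas : ∀ j, MeasurableSet (Xs j))
    (hXdisj : ∀ j k, j ≠ k → Disjoint (Xs j) (Xs k))
    (hXcover : (⋃ j, Xs j) = Set.univ)
    (hppos : ∀ j, 0 < ν (Xs j))
    (H : Fin m → Type) [∀ j, NormedAddCommGroup (H j)] [∀ j, InnerProductSpace ℝ (H j)]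
    [∀ j, CompleteSpace (H j)]
    (Φ : ∀ j, X → H j) (hΦmeas : ∀ j, StronglyMeasurable (Φ j))
    (κ : Fin m → ℝ) (hκ : ∀ j, ∀ x ∈ Xs j, ‖Φ j x‖ ^ 2 ≤ κ j ^ 2)
    (T : ∀ j, H j →L[ℝ] H j)
    (hTcov : ∀ j (u v : H j), ⟪T j u, v⟫_ℝ
      = ∫ x, ⟪u, Φ j x⟫_ℝ * ⟪v, Φ j x⟫_ℝ ∂(condMeasure ν (Xs j)))
    (b : ∀ j, HilbertBasis ℕ ℝ (H j)) (μ : Fin m → ℕ → ℝ)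
    (hμnn : ∀ j i, 0 ≤ μ j i) (hμsum : ∀ j, Summable (μ j))
    (hdiag : ∀ j i, T j (b j i) = μ j i • b j i)
    (f : ∀ j, H j)
    (rj : Fin m → ℝ) (hrj : ∀ j, rj j ∈ Set.Ioc (0:ℝ) (1/2))
    (r : ℝ) (hr : IsLeast (Set.range rj) r)
    (R : ℝ) (hR : 0 < R)
    -- local source conditions: f_j = T_j^{r_j} g_j with ‖g_j‖ ≤ R
    (hsource : ∀ j, ∃ g : H j, ‖g‖ ≤ R ∧
      ∀ i, ⟪f j, b j i⟫_ℝ = μ j i ^ rj j * ⟪g, b j i⟫_ℝ) :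
    -- global source condition: f_ρ = T^r g with the stated bound on the weighted norm of g
    ∃ g : ∀ j, H j,
      ∑ j, (ν (Xs j)).toReal * ‖g j‖ ^ 2
        ≤ (R * Finset.univ.sup' Finset.univ_nonempty
            (fun j => max 1 (κ j ^ 2) ^ (rj j - r))) ^ 2 ∧
      ∀ j i, ⟪f j, b j i⟫_ℝ = μ j i ^ r * ⟪g j, b j i⟫_ℝ :=
  stmt7_general ν m Xs hXmeas hXdisj hppos H Φ κ hκ T hTcov b μ hμnn hdiag f rj hrj r hr R hsource
end
end

section
/- Let T be a bounded positive self-adjoint operator on a separable real Hilbert space H, λ > 0, and P an orthogonal projection on H (P = VV* for a partial isometry V). Define the computational error C_u(P,λ) := ‖(Id − P)(T+λ)^u‖ for u ∈ [0,1/2], with fractional powers via the functional calculus. Then for every u ∈ [0,1/2], C_u(P,λ) ≤ C_{1/2}(P,λ)^{2u}. -/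
/-!
For fixed `y`, the function `s ↦ log ‖Q s y‖` is midpoint convex: by the group law and
self-adjointness, `‖Q ((s + t) / 2) y‖ ^ 2 = ⟪Q s y, Q t y⟫ ≤ ‖Q s y‖ * ‖Q t y‖`. Being continuous,
it is convex, so `‖Q (θ / 2) y‖ ≤ ‖y‖ ^ (1 - θ) * ‖Q (1 / 2) y‖ ^ θ`. Taking `y = (1 - P) x` bounds
`‖Q u ∘L (1 - P)‖` by `‖Q (1 / 2) ∘L (1 - P)‖ ^ (2 * u)`, and passing to adjoints moves the
projection `1 - P` to the left.
-/

open MeasureTheory ProbabilityTheory Real Filter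
open scoped ENNReal NNReal BigOperators InnerProductSpace

noncomputable section

open Topology

lemma dyadic_le_of_midpoint_convex {g : ℝ → ℝ}
    (hm : ∀ s t, g ((s + t) / 2) ≤ (g s + g t) / 2) (n : ℕ) {k : ℕ} (hk : k ≤ 2 ^ n) :
    g (k / 2 ^ n) ≤ (1 - k / 2 ^ n) * g 0 + k / 2 ^ n * g 1 := by
  induction n generalizing k with
  | zero => interval_cases k <;> simp
  | succ n ih =>
    rcases Nat.even_or_odd' k with ⟨j, rfl | rfl⟩
    · have hj : (j : ℝ) / 2 ^ n = ((2 * j : ℕ) : ℝ) / 2 ^ (n + 1) := by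
        push_cast; field_simp; ring
      simpa only [hj] using ih (k := j) (by rw [pow_succ] at hk; omega)
    · have hj : ((2 * j + 1 : ℕ) : ℝ) / 2 ^ (n + 1) =
          ((j : ℝ) / 2 ^ n + ((j + 1 : ℕ) : ℝ) / 2 ^ n) / 2 := by
        push_cast; field_simp; ring
      have h₁ := ih (k := j) (by rw [pow_succ] at hk; omega)
      have h₂ := ih (k := j + 1) (by rw [pow_succ] at hk; omega)
      rw [hj]
      linarith [hm ((j : ℝ) / 2 ^ n) (((j + 1 : ℕ) : ℝ) / 2 ^ n)]

lemma le_of_midpoint_convex {g : ℝ → ℝ} (hc : Continuous g)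
    (hm : ∀ s t, g ((s + t) / 2) ≤ (g s + g t) / 2) {θ : ℝ} (h₀ : 0 ≤ θ) (h₁ : θ ≤ 1) :
    g θ ≤ (1 - θ) * g 0 + θ * g 1 := by
  set c : ℕ → ℝ := fun n ↦ ⌊θ * 2 ^ n⌋₊ / 2 ^ n
  have hc_lim : Tendsto c atTop (𝓝 θ) :=
    (tendsto_nat_floor_mul_div_atTop h₀).comp (tendsto_pow_atTop_atTop_of_one_lt one_lt_two)
  have hc_le : ∀ n, g (c n) ≤ (1 - c n) * g 0 + c n * g 1 := fun n ↦
    dyadic_le_of_midpoint_convex hm n <| Nat.floor_le_of_le <| by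
      push_cast; exact mul_le_of_le_one_left (by positivity) h₁
  exact le_of_tendsto_of_tendsto' ((hc.tendsto θ).comp hc_lim)
    (((tendsto_const_nhds.sub hc_lim).mul tendsto_const_nhds).add
      (hc_lim.mul tendsto_const_nhds)) hc_le

lemma le_rpow_mul_rpow_of_sq_midpoint_le {φ : ℝ → ℝ} (hc : Continuous φ) (hpos : ∀ s, 0 < φ s)
    (hm : ∀ s t, φ ((s + t) / 2) ^ 2 ≤ φ s * φ t) {θ : ℝ} (h₀ : 0 ≤ θ) (h₁ : θ ≤ 1) :
    φ θ ≤ φ 0 ^ (1 - θ) * φ 1 ^ θ := by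
  have hlog_mid : ∀ s t, log (φ ((s + t) / 2)) ≤ (log (φ s) + log (φ t)) / 2 := fun s t ↦ by
    have := log_le_log (pow_pos (hpos _) 2) (hm s t)
    rw [log_pow, log_mul (hpos s).ne' (hpos t).ne'] at this
    push_cast at this
    linarith
  have hlog := le_of_midpoint_convex (hc.log fun s ↦ (hpos s).ne') hlog_mid h₀ h₁
  calc φ θ = exp (log (φ θ)) := (exp_log (hpos θ)).symm
    _ ≤ exp ((1 - θ) * log (φ 0) + θ * log (φ 1)) := exp_le_exp.2 hlog
    _ = φ 0 ^ (1 - θ) * φ 1 ^ θ := by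
      rw [exp_add, rpow_def_of_pos (hpos 0), rpow_def_of_pos (hpos 1), mul_comm (log _),
        mul_comm (log _)]

theorem IsSelfAdjoint.norm_mul_comm {E : Type*} [NonUnitalNormedRing E] [StarRing E]
    [NormedStarGroup E] {a b : E} (ha : IsSelfAdjoint a) (hb : IsSelfAdjoint b) :
    ‖a * b‖ = ‖b * a‖ := by
  rw [← norm_star, star_mul, ha.star_eq, hb.star_eq]

lemma IsOrthoProjOnto.isStarProjection {H : Type*} [NormedAddCommGroup H]
    [InnerProductSpace ℝ H] [CompleteSpace H] {P : H →L[ℝ] H} {S : Submodule ℝ H}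
    (hP : IsOrthoProjOnto P S) : IsStarProjection P :=
  ⟨hP.1, LinearMap.IsSymmetric.isSelfAdjoint hP.2.1⟩

structure IsSymmetricOneParamGroup {H : Type*} [NormedAddCommGroup H] [InnerProductSpace ℝ H]
    (Q : ℝ → H →L[ℝ] H) : Prop where
  map_zero' : Q 0 = 1
  map_add' : ∀ s t, Q (s + t) = Q s ∘L Q t
  isSymmetric : ∀ s, (Q s : H →ₗ[ℝ] H).IsSymmetric

namespace IsSymmetricOneParamGroup

variable {H : Type*} [NormedAddCommGroup H] [InnerProductSpace ℝ H] {Q : ℝ → H →L[ℝ] H}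

lemma apply_ne_zero (hQ : IsSymmetricOneParamGroup Q) (s : ℝ) {y : H} (hy : y ≠ 0) :
    Q s y ≠ 0 := by
  intro h
  apply hy
  have : Q (-s) (Q s y) = y := by rw [← ContinuousLinearMap.comp_apply, ← hQ.map_add',
    neg_add_cancel, hQ.map_zero', one_apply_eq_self]
  rw [← this, h, map_zero]

lemma norm_apply_midpoint_sq_le (hQ : IsSymmetricOneParamGroup Q) (s t : ℝ) (y : H) :
    ‖Q ((s + t) / 2) y‖ ^ 2 ≤ ‖Q s y‖ * ‖Q t y‖ := by
  set m := (s + t) / 2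
  calc ‖Q m y‖ ^ 2 = ⟪Q m (Q m y), y⟫_ℝ := by
        rw [← real_inner_self_eq_norm_sq]; exact (hQ.isSymmetric m _ _).symm
    _ = ⟪Q s (Q t y), y⟫_ℝ := by
        rw [← ContinuousLinearMap.comp_apply, ← ContinuousLinearMap.comp_apply, ← hQ.map_add',
          ← hQ.map_add', add_halves]
    _ = ⟪Q t y, Q s y⟫_ℝ := hQ.isSymmetric s _ _
    _ ≤ ‖Q s y‖ * ‖Q t y‖ := by rw [mul_comm]; exact real_inner_le_norm _ _

lemma norm_apply_mul_le (hQ : IsSymmetricOneParamGroup Q) (hc : Continuous Q) (a : ℝ)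
    {θ : ℝ} (h₀ : 0 ≤ θ) (h₁ : θ ≤ 1) (y : H) :
    ‖Q (θ * a) y‖ ≤ ‖y‖ ^ (1 - θ) * ‖Q a y‖ ^ θ := by
  rcases eq_or_ne y 0 with rfl | hy
  · simp only [map_zero, norm_zero]; positivity
  have hφ := le_rpow_mul_rpow_of_sq_midpoint_le (φ := fun s ↦ ‖Q (s * a) y‖)
    ((hc.comp (continuous_mul_const a)).clm_apply continuous_const).norm
    (fun s ↦ norm_pos_iff.2 (hQ.apply_ne_zero _ hy))
    (fun s t ↦ by
      have := hQ.norm_apply_midpoint_sq_le (s * a) (t * a) y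
      rwa [← add_mul, mul_div_right_comm] at this)
    h₀ h₁
  simpa only [zero_mul, one_mul, hQ.map_zero', one_apply_eq_self] using hφ

lemma norm_mul_comp_le_rpow (hQ : IsSymmetricOneParamGroup Q) (hc : Continuous Q) (a : ℝ)
    {θ : ℝ} (h₀ : 0 ≤ θ) (h₁ : θ ≤ 1) {R : H →L[ℝ] H} (hR : ‖R‖ ≤ 1) :
    ‖Q (θ * a) ∘L R‖ ≤ ‖Q a ∘L R‖ ^ θ := by
  refine ContinuousLinearMap.opNorm_le_bound _ (by positivity) fun x ↦ ?_
  set M := ‖Q a ∘L R‖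
  calc ‖Q (θ * a) (R x)‖ ≤ ‖R x‖ ^ (1 - θ) * ‖Q a (R x)‖ ^ θ := hQ.norm_apply_mul_le hc a h₀ h₁ _
    _ ≤ ‖x‖ ^ (1 - θ) * (M * ‖x‖) ^ θ := by
      gcongr
      · exact R.le_of_opNorm_le hR x |>.trans_eq (one_mul _)
      · exact (Q a ∘L R).le_opNorm x
    _ = M ^ θ * ‖x‖ := by
      rw [mul_rpow (norm_nonneg _) (norm_nonneg _), mul_left_comm,
        ← rpow_add' (norm_nonneg _) (by simp), sub_add_cancel, rpow_one]

lemma norm_comp_mul_le_rpow [CompleteSpace H] (hQ : IsSymmetricOneParamGroup Q) (hc : Continuous Q)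
    (a : ℝ) {θ : ℝ} (h₀ : 0 ≤ θ) (h₁ : θ ≤ 1) {R : H →L[ℝ] H} (hRsa : IsSelfAdjoint R)
    (hR : ‖R‖ ≤ 1) : ‖R ∘L Q (θ * a)‖ ≤ ‖R ∘L Q a‖ ^ θ := by
  have hQsa (s : ℝ) : IsSelfAdjoint (Q s) := LinearMap.IsSymmetric.isSelfAdjoint (hQ.isSymmetric s)
  rw [← ContinuousLinearMap.mul_def, ← ContinuousLinearMap.mul_def,
    hRsa.norm_mul_comm (E := H →L[ℝ] H) (hQsa _), hRsa.norm_mul_comm (E := H →L[ℝ] H) (hQsa _)]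
  exact hQ.norm_mul_comp_le_rpow hc a h₀ h₁ hR

end IsSymmetricOneParamGroup

/-- `Q s` stands for `(T + λ)^s`. -/
theorem stmt12_general {H : Type*} [NormedAddCommGroup H] [InnerProductSpace ℝ H] [CompleteSpace H]
    (P : H →L[ℝ] H) (S : Submodule ℝ H) (hP : IsOrthoProjOnto P S)
    (Q : ℝ → H →L[ℝ] H) (hQcont : Continuous Q)
    (hQzero : Q 0 = 1)
    (hQadd : ∀ s t : ℝ, Q (s + t) = Q s ∘L Q t)
    (hQsa : ∀ (s : ℝ) (u v : H), ⟪Q s u, v⟫_ℝ = ⟪u, Q s v⟫_ℝ)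
    (u : ℝ) (hu : u ∈ Set.Icc (0:ℝ) (1/2)) :
    ‖((1 : H →L[ℝ] H) - P) ∘L Q u‖ ≤ ‖((1 : H →L[ℝ] H) - P) ∘L Q (1/2)‖ ^ (2 * u) := by
  have hQ : IsSymmetricOneParamGroup Q := ⟨hQzero, hQadd, hQsa⟩
  have hR : IsStarProjection (1 - P) := hP.isStarProjection.one_sub
  have := hQ.norm_comp_mul_le_rpow hQcont (1 / 2) (θ := 2 * u) (by linarith [hu.1])
    (by linarith [hu.2]) hR.isSelfAdjoint hR.norm_le
  rwa [show 2 * u * (1 / 2) = u by ring] at this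

/-- Lemma on the computational error: for a bounded positive self-adjoint
operator `T`, `λ > 0`, an orthogonal projection `P` and `u ∈ [0,1/2]`,
`C_u(P,λ) = ‖(Id−P)(T+λ)^u‖ ≤ C_{1/2}(P,λ)^{2u}`.  The fractional powers
`u ↦ (T+λ)^u` are given as the (unique) continuous one-parameter semigroup `Q` of positive
self-adjoint operators with `Q 0 = Id` and `Q 1 = T + λ·Id` (functional calculus). -/
theorem stmt12 {H : Type*} [NormedAddCommGroup H] [InnerProductSpace ℝ H] [CompleteSpace H]
    (T : H →L[ℝ] H)
    (hTsa : ∀ u v : H, ⟪T u, v⟫_ℝ = ⟪u, T v⟫_ℝ) (hTpos : ∀ v : H, 0 ≤ ⟪T v, v⟫_ℝ)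
    (lam : ℝ) (hlam : 0 < lam)
    (P : H →L[ℝ] H) (S : Submodule ℝ H) (hP : IsOrthoProjOnto P S)
    (Q : ℝ → H →L[ℝ] H) (hQcont : Continuous Q)
    (hQzero : Q 0 = 1) (hQone : Q 1 = T + lam • (1 : H →L[ℝ] H))
    (hQadd : ∀ s t : ℝ, Q (s + t) = Q s ∘L Q t)
    (hQsa : ∀ (s : ℝ) (u v : H), ⟪Q s u, v⟫_ℝ = ⟪u, Q s v⟫_ℝ)
    (hQpos : ∀ (s : ℝ) (v : H), 0 ≤ ⟪Q s v, v⟫_ℝ)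
    (u : ℝ) (hu : u ∈ Set.Icc (0:ℝ) (1/2)) :
    ‖((1 : H →L[ℝ] H) - P) ∘L Q u‖ ≤ ‖((1 : H →L[ℝ] H) - P) ∘L Q (1/2)‖ ^ (2 * u) :=
  stmt12_general P S hP Q hQcont hQzero hQadd hQsa u hu
end
end

section
/- Let m ∈ ℕ, p₁,…,p_m ∈ (0,1] with Σ_j p_j = 1, p_max := max_j p_j, and suppose each local effective dimension satisfies N(T_j,λ) ≤ C_γ p_j^γ λ^{−γ} for all λ ∈ (0,1] (which holds when the global covariance operator T has blocks p_j⁻¹T_j and N(T,λ) ≤ C_γλ^{−γ}). Fix r ∈ (0,1/2], γ ∈ (0,1], σ, R > 0 and let λ_n := min(1, (σ²/(R²n))^{1/(2r+1+γ)}). Then there exists n₀ < ∞, depending only on m, p_max, C_γ, r, γ and R/σ (and of order m^{(2r+γ+1)/(2r)} in its dependence on m), such that for all n > n₀ and all j ∈ {1,…,m}, B_{n/m}(T_j, λ_n) ≤ 2, where B_k(T_j,λ) := 1 + (2/(kλ) + √(N(T_j,λ)/(kλ)))². -/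
open MeasureTheory ProbabilityTheory Real Filter
open scoped ENNReal NNReal BigOperators InnerProductSpace

noncomputable section

/-! Since `p_j ≤ 1`, the hypothesis gives `N(T_j, λ) ≤ C λ^{-γ}` for `λ ∈ (0, 1]`. Hence, as soon as
`k λ^{1+γ} ≥ 4(1 + C)`, both `2/(kλ) ≤ 1/2` and `N(T_j, λ)/(kλ) ≤ 1/4`, so `B_k(T_j, λ) ≤ 1 + 1² = 2`.
For `k = n/m` and `λ = λ_n` this requirement reads `n ≥ 4(1 + C) m` when `λ_n = 1`, and
`n^{2r/(2r+1+γ)} ≥ 4(1 + C) (R²/σ²)^{(1+γ)/(2r+1+γ)} m` otherwise; raising the latter to the power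
`(2r+1+γ)/(2r) ≥ 1`, both hold once `n ≥ c m^{(2r+γ+1)/(2r)}` for a suitable `c`. -/

theorem Bconst_le_two {ι : Type*} (μ : ι → ℝ) {k lam : ℝ} (hkl : 4 ≤ k * lam)
    (hN : effDim μ lam ≤ k * lam / 4) : Bconst μ k lam ≤ 2 := by
  have hkl0 : 0 < k * lam := by linarith
  have h_first : 2 / (k * lam) ≤ 1 / 2 := by
    rw [div_le_div_iff₀ hkl0 two_pos]; linarith
  have h_sqrt : √(effDim μ lam / (k * lam)) ≤ 1 / 2 := by
    rw [Real.sqrt_le_left (by norm_num), div_le_iff₀ hkl0]; linarith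
  have h_nonneg : 0 ≤ 2 / (k * lam) + √(effDim μ lam / (k * lam)) := by positivity
  unfold Bconst
  nlinarith

theorem Bconst_le_two_of_effDim_le_rpow {ι : Type*} (μ : ι → ℝ) {k lam C γ : ℝ}
    (hlam0 : 0 < lam) (hlam1 : lam ≤ 1) (hγ : 0 ≤ γ) (hC : 0 ≤ C)
    (hN : effDim μ lam ≤ C * lam ^ (-γ)) (hk : 4 * (1 + C) ≤ k * lam ^ (1 + γ)) :
    Bconst μ k lam ≤ 2 := by
  have hpow : 0 < lam ^ γ := Real.rpow_pos_of_pos hlam0 γ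
  rw [Real.rpow_add hlam0, Real.rpow_one, ← mul_assoc] at hk
  have hk0 : 0 ≤ k * lam := nonneg_of_mul_nonneg_left (by linarith) hpow
  have hkl : k * lam * lam ^ γ ≤ k * lam :=
    mul_le_of_le_one_right hk0 (Real.rpow_le_one hlam0.le hlam1 hγ)
  refine Bconst_le_two μ (by linarith) (hN.trans ?_)
  rw [Real.rpow_neg hlam0.le, ← div_eq_mul_inv, div_le_div_iff₀ hpow four_pos]
  linarith

theorem le_div_mul_div_rpow {M u x m a : ℝ} (hu : 0 < u) (hx : 0 < x) (hm : 0 < m)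
    (h : M * u ^ (-a) * m ≤ x ^ (1 - a)) :
    M ≤ x / m * (u / x) ^ a := by
  have hua : 0 < u ^ a := Real.rpow_pos_of_pos hu a
  have hx_split : x / m * (u / x) ^ a = u ^ a * x ^ (1 - a) / m := by
    rw [Real.div_rpow hu.le hx.le, Real.rpow_sub hx, Real.rpow_one]
    field_simp
  rw [Real.rpow_neg hu.le] at h
  rw [hx_split, le_div_iff₀ hm]
  calc M * m = u ^ a * (M * (u ^ a)⁻¹ * m) := by field_simp
    _ ≤ u ^ a * x ^ (1 - a) := mul_le_mul_of_nonneg_left h hua.le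

theorem le_div_mul_min_one_rpow {M u x m s e β : ℝ} (hM : 0 < M) (hu : 0 < u) (hm : 1 ≤ m)
    (he : 0 ≤ e) (hes : e < s) (hβ : β * (s - e) = s)
    (hx : max M ((M * u ^ (-(e / s))) ^ β) * m ^ β ≤ x) :
    M ≤ x / m * min 1 ((u / x) ^ (1 / s)) ^ e := by
  have hs : 0 < s := he.trans_lt hes
  have hβ_eq : β = s / (s - e) := by rw [eq_div_iff (sub_pos.mpr hes).ne']; exact hβ
  have hβ_inv : 1 - e / s = β⁻¹ := by rw [hβ_eq, inv_div]; field_simp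
  have hβ1 : 1 ≤ β := by rw [hβ_eq, one_le_div (sub_pos.mpr hes)]; linarith
  have hm0 : 0 < m := by linarith
  have hmβ : 0 < m ^ β := Real.rpow_pos_of_pos hm0 β
  have hc : 0 < max M ((M * u ^ (-(e / s))) ^ β) := lt_max_of_lt_left hM
  have hx0 : 0 < x := (mul_pos hc hmβ).trans_le hx
  rcases le_total 1 ((u / x) ^ (1 / s)) with h_one | h_rpow
  · rw [min_eq_left h_one, Real.one_rpow, mul_one, le_div_iff₀ hm0]
    calc M * m ≤ M * m ^ β := by
          gcongr
          simpa using Real.rpow_le_rpow_of_exponent_le hm hβ1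
      _ ≤ x := (mul_le_mul_of_nonneg_right (le_max_left _ _) hmβ.le).trans hx
  · rw [min_eq_right h_rpow, ← Real.rpow_mul (div_pos hu hx0).le, one_div_mul_eq_div]
    refine le_div_mul_div_rpow hu hx0 hm0 ?_
    have hyβ : (M * u ^ (-(e / s)) * m) ^ β ≤ x := by
      rw [Real.mul_rpow (by positivity) hm0.le]
      exact (mul_le_mul_of_nonneg_right (le_max_right _ _) hmβ.le).trans hx
    calc M * u ^ (-(e / s)) * m = ((M * u ^ (-(e / s)) * m) ^ β) ^ β⁻¹ := by
          rw [← Real.rpow_mul (by positivity), mul_inv_cancel₀ (by positivity), Real.rpow_one]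
      _ ≤ x ^ (1 - e / s) := by
          rw [hβ_inv]
          exact Real.rpow_le_rpow (by positivity) hyβ (by positivity)

theorem stmt17_general (m : ℕ) [NeZero m]
    (μ : Fin m → ℕ → ℝ)
    (p : Fin m → ℝ) (hp : ∀ j, p j ∈ Set.Ioc (0:ℝ) 1)
    (Cγ γ r σ R : ℝ) (hCγ : 0 < Cγ) (hγ : γ ∈ Set.Ioc (0:ℝ) 1)
    (hr : r ∈ Set.Ioc (0:ℝ) (1/2)) (hσ : 0 < σ) (hR : 0 < R)
    (hcap : ∀ j, ∀ lam ∈ Set.Ioc (0:ℝ) 1, effDim (μ j) lam ≤ Cγ * p j ^ γ * lam ^ (-γ)) :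
    ∃ c : ℝ, 0 < c ∧ ∀ n : ℕ, c * (m : ℝ) ^ ((2 * r + γ + 1) / (2 * r)) < n → ∀ j,
      Bconst (μ j) ((n : ℝ) / m)
        (min 1 ((σ ^ 2 / (R ^ 2 * n)) ^ ((1:ℝ) / (2 * r + 1 + γ)))) ≤ 2 := by
  set M := 4 * (1 + Cγ)
  set u := σ ^ 2 / R ^ 2
  have hM : 0 < M := by positivity
  have hβ : (2 * r + γ + 1) / (2 * r) * ((2 * r + 1 + γ) - (1 + γ)) = 2 * r + 1 + γ := by
    field_simp [hr.1.ne']; ring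
  refine ⟨max M ((M * u ^ (-((1 + γ) / (2 * r + 1 + γ)))) ^ ((2 * r + γ + 1) / (2 * r))),
    lt_max_of_lt_left hM, fun n hn j => ?_⟩
  have hm : (1 : ℝ) ≤ m := Nat.one_le_cast.mpr NeZero.one_le
  have hlam := le_div_mul_min_one_rpow hM (by positivity) hm (by linarith [hγ.1])
    (by linarith [hr.1]) hβ hn.le
  rw [div_div] at hlam
  have hn0 : (0 : ℝ) < n := lt_of_le_of_lt (by positivity) hn
  set lam := min 1 ((σ ^ 2 / (R ^ 2 * n)) ^ ((1:ℝ) / (2 * r + 1 + γ)))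
  have hlam0 : 0 < lam := lt_min one_pos (Real.rpow_pos_of_pos (by positivity) _)
  have hlam1 : lam ≤ 1 := min_le_left _ _
  have hN : effDim (μ j) lam ≤ Cγ * lam ^ (-γ) := by
    refine (hcap j lam ⟨hlam0, hlam1⟩).trans ?_
    have hpγ : p j ^ γ ≤ 1 := Real.rpow_le_one (hp j).1.le (hp j).2 hγ.1.le
    calc Cγ * p j ^ γ * lam ^ (-γ) ≤ Cγ * 1 * lam ^ (-γ) := by gcongr
      _ = Cγ * lam ^ (-γ) := by rw [mul_one]
  exact Bconst_le_two_of_effDim_le_rpow (μ j) hlam0 hlam1 hγ.1.le hCγ.le hN hlam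

/-- if the local effective dimensions satisfy
`N(T_j,λ) ≤ C_γ p_j^γ λ^{-γ}` then, with `λ_n = min(1, (σ²/(R²n))^{1/(2r+1+γ)})`,
one has `B_{n/m}(T_j, λ_n) ≤ 2` for every `j`, provided `n > n₀` with
`n₀ = c·m^{(2r+γ+1)/(2r)}`. -/
theorem stmt17 (m : ℕ) [NeZero m]
    (H : Fin m → Type*) [∀ j, NormedAddCommGroup (H j)] [∀ j, InnerProductSpace ℝ (H j)]
    [∀ j, CompleteSpace (H j)]
    (T : ∀ j, H j →L[ℝ] H j) (b : ∀ j, HilbertBasis ℕ ℝ (H j)) (μ : Fin m → ℕ → ℝ)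
    (hμnn : ∀ j i, 0 ≤ μ j i) (hμsum : ∀ j, Summable (μ j))
    (hdiag : ∀ j i, T j (b j i) = μ j i • b j i)
    (p : Fin m → ℝ) (hp : ∀ j, p j ∈ Set.Ioc (0:ℝ) 1) (hpsum : ∑ j, p j = 1)
    (pmax : ℝ) (hpmax : IsGreatest (Set.range p) pmax)
    (Cγ γ r σ R : ℝ) (hCγ : 0 < Cγ) (hγ : γ ∈ Set.Ioc (0:ℝ) 1)
    (hr : r ∈ Set.Ioc (0:ℝ) (1/2)) (hσ : 0 < σ) (hR : 0 < R)
    (hcap : ∀ j, ∀ lam ∈ Set.Ioc (0:ℝ) 1, effDim (μ j) lam ≤ Cγ * p j ^ γ * lam ^ (-γ)) :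
    ∃ c : ℝ, 0 < c ∧ ∀ n : ℕ, c * (m : ℝ) ^ ((2 * r + γ + 1) / (2 * r)) < n → ∀ j,
      Bconst (μ j) ((n : ℝ) / m)
        (min 1 ((σ ^ 2 / (R ^ 2 * n)) ^ ((1:ℝ) / (2 * r + 1 + γ)))) ≤ 2 :=
  stmt17_general m μ p hp Cγ γ r σ R hCγ hγ hr hσ hR hcap
end
end
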